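/- Let M be the d₁d₂ × d₁d₂ square with constant rows M(l,c) = l, and define the product basis |ψ_{n,m,l}⟩ = (1/√(d₁d₂)) Σ_{i,j} ω_{d₁}^{ni} ω_{d₂}^{mj} |i⟩ ⊗ |j⟩ ⊗ |l⟩ in C^{d₁} ⊗ C^{d₂} ⊗ C^{d₁d₂}. Then: (a) {|ψ_{n,m,l}⟩} is an orthonormal basis consisting of product vectors, and (b) for any Latin square L of order d₁d₂ with associated basis |φ_{n,m,l}⟩ = (1/√(d₁d₂)) Σ_{i,j} ω_{d₁}^{ni} ω_{d₂}^{mj} |i⟩ ⊗ |j⟩ ⊗ |L(l, f(i,j))⟩, the two bases are mutually unbiased: |⟨φ_{n',m',l'} | ψ_{n,m,l}⟩| = 1/(d₁d₂) for all indices. -/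

import Mathlib

open Complex

/-- Component at `|i⟩⊗|j⟩⊗|r⟩` of the product-basis vector `|ψ_{n,m,l}⟩` built from the
constant-rows square `M(l,c) = l`. -/
noncomputable def psiProd (d₁ d₂ : ℕ)
    (n : ZMod d₁) (m : ZMod d₂) (l : ZMod (d₁ * d₂))
    (i : ZMod d₁) (j : ZMod d₂) (r : ZMod (d₁ * d₂)) : ℂ :=
  ((Real.sqrt (d₁ * d₂) : ℂ))⁻¹ *
    Complex.exp (2 * Real.pi * Complex.I / d₁) ^ (n.val * i.val) *
    Complex.exp (2 * Real.pi * Complex.I / d₂) ^ (m.val * j.val) *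
    (if r = l then 1 else 0)

/-- The same vector viewed in `EuclideanSpace`. -/
noncomputable def psiProdVec (d₁ d₂ : ℕ) [NeZero d₁] [NeZero d₂] [NeZero (d₁ * d₂)]
    (nml : ZMod d₁ × ZMod d₂ × ZMod (d₁ * d₂)) :
    EuclideanSpace ℂ (ZMod d₁ × ZMod d₂ × ZMod (d₁ * d₂)) :=
  WithLp.toLp 2 (fun ijr : ZMod d₁ × ZMod d₂ × ZMod (d₁ * d₂) =>
    psiProd d₁ d₂ nml.1 nml.2.1 nml.2.2 ijr.1 ijr.2.1 ijr.2.2)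

/-- Component of the Latin-square basis vector `|φ_{n,m,l}⟩`, with `f(i,j) = d₂·i + j`. -/
noncomputable def phiC2 (d₁ d₂ : ℕ)
    (L : ZMod (d₁ * d₂) → ZMod (d₁ * d₂) → ZMod (d₁ * d₂))
    (n : ZMod d₁) (m : ZMod d₂) (l : ZMod (d₁ * d₂))
    (i : ZMod d₁) (j : ZMod d₂) (r : ZMod (d₁ * d₂)) : ℂ :=
  ((Real.sqrt (d₁ * d₂) : ℂ))⁻¹ *
    Complex.exp (2 * Real.pi * Complex.I / d₁) ^ (n.val * i.val) *
    Complex.exp (2 * Real.pi * Complex.I / d₂) ^ (m.val * j.val) *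
    (if L l (((d₂ * i.val + j.val : ℕ)) : ZMod (d₁ * d₂)) = r then 1 else 0)

/-! The phases `i ↦ ω_d^{a i}` are the additive characters of `ZMod d`, hence orthogonal; with the
orthonormality of the standard basis of `ℂ^{d₁d₂}` this makes `ψ` orthonormal. In
`⟨φ_{n',m',l'}, ψ_{n,m,l}⟩` the sum over `r` keeps only the pairs with `L(l', f(i,j)) = l`; since
`L l' ∘ f` is bijective exactly one pair `(i, j)` survives, contributing a product of unimodular
phases times `1/(d₁d₂)`. -/

open Function ComplexConjugate

lemma AddChar.sum_conj_mulShift_mul_mulShift {R : Type*} [CommRing R] [Fintype R]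
    [DecidableEq R] {ψ : AddChar R ℂ} (hψ : ψ.IsPrimitive) (a b : R) :
    ∑ x, conj (ψ.mulShift a x) * ψ.mulShift b x =
      if a = b then (Fintype.card R : ℂ) else 0 := by
  simp_rw [AddChar.mulShift_apply, ← AddChar.map_neg_eq_conj, ← AddChar.map_add_eq_mul,
    show ∀ x, -(a * x) + b * x = x * (b - a) from fun x => by ring]
  rw [AddChar.sum_mulShift _ hψ]
  simp [sub_eq_zero, eq_comm]

lemma exp_two_pi_I_div_pow_val_mul_val (d : ℕ) [NeZero d] (a b : ZMod d) :
    exp (2 * Real.pi * I / d) ^ (a.val * b.val) = ZMod.stdAddChar.mulShift a b := by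
  have hab : a * b = ((a.val * b.val : ℕ) : ZMod d) := by simp
  rw [AddChar.mulShift_apply, hab, ZMod.stdAddChar_apply, ZMod.toCircle_natCast,
    ← Complex.exp_nat_mul]
  push_cast
  ring_nf

def pairIndex (d₁ d₂ : ℕ) (p : ZMod d₁ × ZMod d₂) : ZMod (d₁ * d₂) :=
  ((d₂ * p.1.val + p.2.val : ℕ) : ZMod (d₁ * d₂))

lemma pairIndex_bijective (d₁ d₂ : ℕ) [NeZero d₁] [NeZero d₂] :
    Bijective (pairIndex d₁ d₂) := by
  rw [Fintype.bijective_iff_injective_and_card]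
  refine ⟨fun ⟨i, j⟩ ⟨i', j'⟩ h => ?_, by simp [ZMod.card]⟩
  have hval : d₂ * i.val + j.val = d₂ * i'.val + j'.val := by
    have := congrArg ZMod.val h
    rwa [pairIndex, pairIndex,
      ZMod.val_natCast_of_lt (Nat.mul_add_lt_mul_of_lt_of_lt i.val_lt j.val_lt),
      ZMod.val_natCast_of_lt (Nat.mul_add_lt_mul_of_lt_of_lt i'.val_lt j'.val_lt)] at this
  have hd₂ : 0 < d₂ := Nat.pos_of_neZero d₂
  obtain ⟨hi, hj⟩ := (Nat.div_mod_unique hd₂).2 ⟨add_comm _ _, j.val_lt⟩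
  obtain ⟨hi', hj'⟩ := (Nat.div_mod_unique hd₂).2 ⟨(add_comm _ _).trans hval.symm, j'.val_lt⟩
  exact Prod.ext (ZMod.val_injective _ (hi.symm.trans hi'))
    (ZMod.val_injective _ (hj.symm.trans hj'))

lemma Function.Bijective.norm_sum_ite_eq {α β E : Type*} [Fintype α] [Fintype β]
    [DecidableEq β] [SeminormedAddCommGroup E] {g : α → β} (hg : Bijective g) {F : α → E} {c : ℝ}
    (hF : ∀ a, ‖F a‖ = c) (b : β) :
    ‖∑ a, if g a = b then F a else 0‖ = c := by
  rw [← (Equiv.ofBijective g hg).symm.sum_comp]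
  simp only [Equiv.ofBijective_apply_symm_apply, Finset.sum_ite_eq', Finset.mem_univ, if_true]
  exact hF _

lemma sum_conj_mul_product_vectors {α β γ : Type*} [Fintype α] [Fintype β] [Fintype γ]
    (c c' : ℂ) (u u' : α → ℂ) (v v' : β → ℂ) (w w' : γ → ℂ) :
    ∑ i, ∑ j, ∑ r, conj (c * (u i * v j * w r)) * (c' * (u' i * v' j * w' r)) =
      starRingEnd ℂ c * c' * ((∑ i, conj (u i) * u' i) *
        (∑ j, conj (v j) * v' j) * ∑ r, conj (w r) * w' r) := by
  rw [Finset.sum_mul_sum, Finset.sum_mul, Finset.mul_sum]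
  simp_rw [Finset.sum_mul, Finset.mul_sum, map_mul]
  refine Finset.sum_congr rfl fun i _ => Finset.sum_congr rfl fun j _ =>
    Finset.sum_congr rfl fun r _ => by ring

lemma conj_inv_sqrt_mul_inv_sqrt {x : ℝ} (hx : 0 ≤ x) :
    conj ((√x : ℂ)⁻¹) * (√x : ℂ)⁻¹ = (x : ℂ)⁻¹ := by
  rw [map_inv₀, conj_ofReal, ← mul_inv, ← ofReal_mul, Real.mul_self_sqrt hx]

section

variable (d₁ d₂ : ℕ) [NeZero d₁] [NeZero d₂]

lemma psiProd_eq (n : ZMod d₁) (m : ZMod d₂) (l : ZMod (d₁ * d₂))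
    (i : ZMod d₁) (j : ZMod d₂) (r : ZMod (d₁ * d₂)) :
    psiProd d₁ d₂ n m l i j r = (√(d₁ * d₂) : ℂ)⁻¹ *
      (ZMod.stdAddChar.mulShift n i * ZMod.stdAddChar.mulShift m j *
        (Pi.single l 1 : _ → ℂ) r) := by
  simp only [psiProd, exp_two_pi_I_div_pow_val_mul_val, Pi.single_apply]
  ring

lemma phiC2_eq (L : ZMod (d₁ * d₂) → ZMod (d₁ * d₂) → ZMod (d₁ * d₂))
    (n : ZMod d₁) (m : ZMod d₂) (l : ZMod (d₁ * d₂))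
    (i : ZMod d₁) (j : ZMod d₂) (r : ZMod (d₁ * d₂)) :
    phiC2 d₁ d₂ L n m l i j r = (√(d₁ * d₂) : ℂ)⁻¹ *
      (ZMod.stdAddChar.mulShift n i * ZMod.stdAddChar.mulShift m j *
        if L l (pairIndex d₁ d₂ (i, j)) = r then 1 else 0) := by
  simp only [phiC2, exp_two_pi_I_div_pow_val_mul_val]
  unfold pairIndex
  ring

lemma orthonormal_psiProdVec : Orthonormal ℂ (psiProdVec d₁ d₂) := by
  rw [orthonormal_iff_ite]
  rintro ⟨n, m, l⟩ ⟨n', m', l'⟩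
  rw [psiProdVec, psiProdVec, EuclideanSpace.inner_toLp_toLp, dotProduct_comm]
  simp only [dotProduct, Pi.star_apply, Complex.star_def, Fintype.sum_prod_type, psiProd_eq]
  rw [sum_conj_mul_product_vectors, conj_inv_sqrt_mul_inv_sqrt (by positivity),
    AddChar.sum_conj_mulShift_mul_mulShift (ZMod.isPrimitive_stdAddChar d₁),
    AddChar.sum_conj_mulShift_mul_mulShift (ZMod.isPrimitive_stdAddChar d₂)]
  have hδ : ∑ r : ZMod (d₁ * d₂), conj ((Pi.single l 1 : _ → ℂ) r) *
      (Pi.single l' 1 : _ → ℂ) r = if l = l' then 1 else 0 := by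
    simp [Pi.single_apply, eq_comm]
  rw [hδ]
  have hd₁ : (d₁ : ℂ) ≠ 0 := NeZero.ne _
  have hd₂ : (d₂ : ℂ) ≠ 0 := NeZero.ne _
  by_cases hn : n = n' <;> by_cases hm : m = m' <;> by_cases hl : l = l' <;>
    simp [hn, hm, hl, ZMod.card]
  field_simp

lemma norm_sum_conj_phiC2_mul_psiProd (L : ZMod (d₁ * d₂) → ZMod (d₁ * d₂) → ZMod (d₁ * d₂))
    (hrow : ∀ l, Bijective (L l)) (n' n : ZMod d₁) (m' m : ZMod d₂) (l' l : ZMod (d₁ * d₂)) :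
    ‖∑ i : ZMod d₁, ∑ j : ZMod d₂, ∑ r : ZMod (d₁ * d₂),
        conj (phiC2 d₁ d₂ L n' m' l' i j r) * psiProd d₁ d₂ n m l i j r‖ =
      ((d₁ : ℝ) * d₂)⁻¹ := by
  have hsum_r : ∀ i j,
      ∑ r, conj (phiC2 d₁ d₂ L n' m' l' i j r) * psiProd d₁ d₂ n m l i j r =
        if L l' (pairIndex d₁ d₂ (i, j)) = l then
          ((d₁ * d₂ : ℝ) : ℂ)⁻¹ *
            (conj (ZMod.stdAddChar.mulShift n' i) * ZMod.stdAddChar.mulShift n i *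
              (conj (ZMod.stdAddChar.mulShift m' j) * ZMod.stdAddChar.mulShift m j))
        else 0 := by
    intro i j
    simp only [phiC2_eq, psiProd_eq, Pi.single_apply, mul_ite, mul_one, mul_zero,
      Finset.sum_ite_eq', Finset.mem_univ, if_true]
    split_ifs
    · rw [← conj_inv_sqrt_mul_inv_sqrt (x := d₁ * d₂) (by positivity)]
      simp only [map_mul]
      ring
    · simp
  rw [← Fintype.sum_prod_type']
  simp only [hsum_r]
  refine ((hrow l').comp (pairIndex_bijective d₁ d₂)).norm_sum_ite_eq (fun p => ?_) l
  simp [AddChar.norm_apply]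

end

theorem product_basis_mub_general (d₁ d₂ : ℕ) [NeZero d₁] [NeZero d₂]
    (L : ZMod (d₁ * d₂) → ZMod (d₁ * d₂) → ZMod (d₁ * d₂))
    (hrow : ∀ l, Function.Bijective (L l)) :
    Orthonormal ℂ (psiProdVec d₁ d₂) ∧
    Submodule.span ℂ (Set.range (psiProdVec d₁ d₂)) = ⊤ ∧
    (∀ n : ZMod d₁, ∀ m : ZMod d₂, ∀ l : ZMod (d₁ * d₂),
      ∃ (u : ZMod d₁ → ℂ) (v : ZMod d₂ → ℂ) (w : ZMod (d₁ * d₂) → ℂ),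
        ∀ i j r, psiProd d₁ d₂ n m l i j r = u i * v j * w r) ∧
    (∀ n' n : ZMod d₁, ∀ m' m : ZMod d₂, ∀ l' l : ZMod (d₁ * d₂),
      ‖(∑ i : ZMod d₁, ∑ j : ZMod d₂, ∑ r : ZMod (d₁ * d₂),
        (starRingEnd ℂ) (phiC2 d₁ d₂ L n' m' l' i j r) * psiProd d₁ d₂ n m l i j r)‖ =
        ((d₁ : ℝ) * d₂)⁻¹) := by
  refine ⟨orthonormal_psiProdVec d₁ d₂, ?_, fun n m l => ?_,
    norm_sum_conj_phiC2_mul_psiProd d₁ d₂ L hrow⟩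
  · exact (orthonormal_psiProdVec d₁ d₂).linearIndependent.span_eq_top_of_card_eq_finrank
      (by simp [finrank_euclideanSpace])
  · exact ⟨ZMod.stdAddChar.mulShift n, ZMod.stdAddChar.mulShift m,
      fun r => (√(d₁ * d₂) : ℂ)⁻¹ * (Pi.single l 1 : _ → ℂ) r,
      fun i j r => by rw [psiProd_eq]; ring⟩

/-- (a) the vectors `|ψ_{n,m,l}⟩` form an orthonormal basis of
`C^{d₁} ⊗ C^{d₂} ⊗ C^{d₁d₂}` consisting of product vectors, and (b) this basis is
mutually unbiased with the basis `|φ_{n,m,l}⟩` associated to any Latin square `L` of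
order `d₁d₂`: all pairwise inner products have modulus `1/(d₁d₂)`. -/
theorem product_basis_mub (d₁ d₂ : ℕ) [NeZero d₁] [NeZero d₂] [NeZero (d₁ * d₂)]
    (L : ZMod (d₁ * d₂) → ZMod (d₁ * d₂) → ZMod (d₁ * d₂))
    (hrow : ∀ l, Function.Bijective (L l))
    (hcol : ∀ c, Function.Bijective fun l => L l c) :
    Orthonormal ℂ (psiProdVec d₁ d₂) ∧
    Submodule.span ℂ (Set.range (psiProdVec d₁ d₂)) = ⊤ ∧
    (∀ n : ZMod d₁, ∀ m : ZMod d₂, ∀ l : ZMod (d₁ * d₂),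
      ∃ (u : ZMod d₁ → ℂ) (v : ZMod d₂ → ℂ) (w : ZMod (d₁ * d₂) → ℂ),
        ∀ i j r, psiProd d₁ d₂ n m l i j r = u i * v j * w r) ∧
    (∀ n' n : ZMod d₁, ∀ m' m : ZMod d₂, ∀ l' l : ZMod (d₁ * d₂),
      ‖(∑ i : ZMod d₁, ∑ j : ZMod d₂, ∑ r : ZMod (d₁ * d₂),
        (starRingEnd ℂ) (phiC2 d₁ d₂ L n' m' l' i j r) * psiProd d₁ d₂ n m l i j r)‖ =
        ((d₁ : ℝ) * d₂)⁻¹) :=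
  product_basis_mub_general d₁ d₂ L hrow
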